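/- arXiv:math/0601493 — 4 statements merged into one kernel-verified Lean document; each statement's English description precedes it below -/
import Mathlib

section
/- The polynomial X^4 - 4X^3 + 3X - 1 (the characteristic polynomial of the matrix A1) has four pairwise distinct real roots, and none of these roots equals 1 or -1; hence A1 is a hyperbolic operator (it has four distinct real eigenvalues, none of absolute value 1). -/
open Matrix Polynomial

def A1R : Matrix (Fin 4) (Fin 4) ℝ :=
  !![0, 1, 0, 0; 0, 0, 1, 0; 0, 0, 0, 1; 1, -3, 0, 4]

/-- The characteristic polynomial of `A1`, as a real polynomial. -/
noncomputable def p1 : Polynomial ℝ := X ^ 4 - 4 * X ^ 3 + 3 * X - 1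

/-
The sign pattern of `p1` at `-1, 0, 1/2, 1, 3, 4` is `+, -, +, -, -, +`, so the intermediate value
theorem gives four roots in the disjoint open intervals `(-1, 0), (0, 1/2), (1/2, 1), (3, 4)`;
none of them is `±1`. A quartic has at most four roots, so these are all of them, and they lie in
the spectrum of `A1R` because `p1` is its characteristic polynomial (it is a companion matrix).
-/

theorem Polynomial.exists_eq_of_isRoot_of_injective {R : Type*} [CommRing R] [IsDomain R]
    {p : R[X]} {n : ℕ} (hp : p ≠ 0) (hdeg : p.natDegree ≤ n) {r : Fin n → R}
    (hr : Function.Injective r) (hroot : ∀ i, p.IsRoot (r i)) {x : R} (hx : p.IsRoot x) :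
    ∃ i, x = r i := by
  classical
  by_contra! hxr
  have hsub : Finset.cons x (Finset.univ.map ⟨r, hr⟩) (by simpa using fun i => (hxr i).symm)
      ⊆ p.roots.toFinset := by
    intro y hy
    simp only [Finset.mem_cons, Finset.mem_map, Finset.mem_univ, true_and,
      Function.Embedding.coeFn_mk] at hy
    rw [Multiset.mem_toFinset, mem_roots hp]
    rcases hy with rfl | ⟨i, rfl⟩
    exacts [hx, hroot i]
  have hcard := (Finset.card_le_card hsub).trans (p.roots.toFinset_card_le.trans (card_roots' p))
  rw [Finset.card_cons, Finset.card_map, Finset.card_univ, Fintype.card_fin] at hcard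
  omega

theorem Polynomial.exists_isRoot_Ioo_of_eval_mul_neg {p : ℝ[X]} {a b : ℝ} (hab : a ≤ b)
    (h : p.eval a * p.eval b < 0) : ∃ x ∈ Set.Ioo a b, p.IsRoot x := by
  rcases mul_neg_iff.mp h with ⟨ha, hb⟩ | ⟨ha, hb⟩
  · exact intermediate_value_Ioo' hab p.continuous.continuousOn ⟨hb, ha⟩
  · exact intermediate_value_Ioo hab p.continuous.continuousOn ⟨ha, hb⟩

theorem eval_p1 (x : ℝ) : p1.eval x = x ^ 4 - 4 * x ^ 3 + 3 * x - 1 := by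
  simp [p1]

theorem exists_strictMono_roots_p1 :
    ∃ r : Fin 4 → ℝ, StrictMono r ∧ (∀ i, p1.IsRoot (r i)) ∧
      ∀ i, r i ≠ 1 ∧ r i ≠ -1 := by
  have ivt (a b : ℝ) (hab : a ≤ b) (h : p1.eval a * p1.eval b < 0) :
      ∃ x ∈ Set.Ioo a b, p1.IsRoot x :=
    exists_isRoot_Ioo_of_eval_mul_neg hab h
  obtain ⟨a, ⟨ha₁, ha₂⟩, hra⟩ := ivt (-1) 0 (by norm_num) (by norm_num [eval_p1])
  obtain ⟨b, ⟨hb₁, hb₂⟩, hrb⟩ := ivt 0 (1 / 2) (by norm_num) (by norm_num [eval_p1])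
  obtain ⟨c, ⟨hc₁, hc₂⟩, hrc⟩ := ivt (1 / 2) 1 (by norm_num) (by norm_num [eval_p1])
  obtain ⟨d, ⟨hd₁, hd₂⟩, hrd⟩ := ivt 3 4 (by norm_num) (by norm_num [eval_p1])
  refine ⟨![a, b, c, d], Fin.strictMono_iff_lt_succ.2 ?_, ?_, ?_⟩
  · intro i
    fin_cases i <;> simp only [Fin.reduceFinMk, Fin.reduceCastSucc, Fin.reduceSucc, cons_val] <;>
      linarith
  · intro i
    fin_cases i <;> simpa
  · intro i
    fin_cases i <;> simp only [Fin.reduceFinMk, cons_val, ne_eq] <;> constructor <;> intro h <;>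
      linarith

theorem charmatrix_A1R :
    A1R.charmatrix = !![X, -1, 0, 0; 0, X, -1, 0; 0, 0, X, -1; -1, 3, 0, X - 4] := by
  ext i j
  fin_cases i <;> fin_cases j <;> simp [charmatrix, A1R, ← map_ofNat C]

theorem charpoly_A1R : A1R.charpoly = p1 := by
  rw [Matrix.charpoly, charmatrix_A1R, det_succ_row_zero]
  simp only [Fin.sum_univ_four, det_fin_three, submatrix_apply, of_apply, Fin.succAbove, cons_val,
    Fin.reduceSucc, Fin.reduceCastSucc, Fin.reduceLT, ↓reduceIte, Fin.val_zero, Fin.val_one,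
    Fin.val_two]
  rw [p1]
  ring

theorem statement1 :
    ∃ r : Fin 4 → ℝ,
      Function.Injective r ∧
      (∀ i, p1.eval (r i) = 0) ∧
      (∀ x : ℝ, p1.eval x = 0 → ∃ i, x = r i) ∧
      (∀ i, r i ≠ 1 ∧ r i ≠ -1) ∧
      (∀ i, r i ∈ spectrum ℝ A1R) ∧
      (∀ i, |r i| ≠ 1) := by
  obtain ⟨r, hmono, hroot, hne⟩ := exists_strictMono_roots_p1
  have hp1_ne : p1 ≠ 0 := charpoly_A1R ▸ A1R.charpoly_monic.ne_zero
  have hdeg : p1.natDegree ≤ 4 := by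
    rw [← charpoly_A1R, A1R.charpoly_natDegree_eq_dim, Fintype.card_fin]
  refine ⟨r, hmono.injective, hroot, fun x hx => ?_, hne, fun i => ?_, fun i => ?_⟩
  · exact exists_eq_of_isRoot_of_injective hp1_ne hdeg hmono.injective hroot hx
  · exact mem_spectrum_of_isRoot_charpoly (charpoly_A1R ▸ hroot i)
  · rw [Ne, abs_eq zero_le_one, not_or]
    exact hne i
end

section
/- The matrices B11, B12, B13 generate a free abelian group of rank 3: for all integers i, j, k, if B11^i · B12^j · B13^k equals the identity matrix, then i = j = k = 0. -/
open Matrix Polynomial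

def A1 : Matrix (Fin 4) (Fin 4) ℚ :=
  !![0, 1, 0, 0; 0, 0, 1, 0; 0, 0, 0, 1; 1, -3, 0, 4]

lemma hdetA1 : A1.det ≠ 0 := by
  rw [Matrix.det_succ_row_zero]
  simp only [Fin.sum_univ_four, Matrix.det_fin_three, Matrix.submatrix_apply]
  simp (config := {decide := true}) [A1]

lemma hdetA1sub : (A1 - 1).det ≠ 0 := by
  have h : A1 - 1 = !![-1, 1, 0, 0; 0, -1, 1, 0; 0, 0, -1, 1; 1, -3, 0, 3] := by
    ext i j
    fin_cases i <;> fin_cases j <;>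
      simp [A1, Matrix.one_apply, Matrix.vecHead, Matrix.vecTail] <;> norm_num
  rw [h, Matrix.det_succ_row_zero]
  simp only [Fin.sum_univ_four, Matrix.det_fin_three, Matrix.submatrix_apply]
  simp (config := {decide := true}) [show Fin.succAbove (1 : Fin 4) 2 = 3 by decide]

lemma hdetA1add : (A1 + 1).det ≠ 0 := by
  have h : A1 + 1 = !![1, 1, 0, 0; 0, 1, 1, 0; 0, 0, 1, 1; 1, -3, 0, 5] := by
    ext i j
    fin_cases i <;> fin_cases j <;>
      simp [A1, Matrix.one_apply, Matrix.vecHead, Matrix.vecTail] <;> norm_num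
  rw [h, Matrix.det_succ_row_zero]
  simp only [Fin.sum_univ_four, Matrix.det_fin_three, Matrix.submatrix_apply]
  simp (config := {decide := true}) [show Fin.succAbove (1 : Fin 4) 2 = 3 by decide]
  norm_num

noncomputable def gA1 : GL (Fin 4) ℚ := Matrix.GeneralLinearGroup.mkOfDetNeZero A1 hdetA1
noncomputable def uA1 : GL (Fin 4) ℚ := Matrix.GeneralLinearGroup.mkOfDetNeZero (A1 - 1) hdetA1sub
noncomputable def vA1 : GL (Fin 4) ℚ := Matrix.GeneralLinearGroup.mkOfDetNeZero (A1 + 1) hdetA1add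

noncomputable def B11 : GL (Fin 4) ℚ := (gA1 ^ 2)⁻¹
noncomputable def B12 : GL (Fin 4) ℚ := uA1 ^ 2 * (gA1 ^ 2)⁻¹
noncomputable def B13 : GL (Fin 4) ℚ := uA1 ^ 2 * vA1 * (gA1 ^ 2)⁻¹

/-!
For a real root `x` of `X⁴ - 4X³ + 3X - 1`, the characteristic polynomial of the companion
matrix `A1`, the vector `(1, x, x², x³)` is a common eigenvector of `B11`, `B12`, `B13`, with
eigenvalues `x⁻²`, `(x - 1)² x⁻²` and `(x - 1)² (x + 1) x⁻²`. Taking logarithms, a relation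
`B11 ^ i * B12 ^ j * B13 ^ k = 1` gives
`-2 (i + j + k) log |x| + 2 (j + k) log |x - 1| + k log |x + 1| = 0`
at each of the three real roots near `0.425`, `0.677` and `-0.913`. The `3 × 3` matrix of these
logarithms (a regulator of the units `x`, `x - 1`, `x + 1`) is nonsingular: rational bounds on
its entries make it strictly diagonally dominant once its columns are scaled by `3, 2, 1`.
Hence `i + j + k = j + k = k = 0`.
-/

open Real

theorem exists_mem_Icc_eq_zero_of_mul_nonpos {f : ℝ → ℝ} {a b : ℝ} (hab : a ≤ b)
    (hf : ContinuousOn f (Set.Icc a b)) (h : f a * f b ≤ 0) : ∃ x ∈ Set.Icc a b, f x = 0 := by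
  rcases mul_nonpos_iff.mp h with ⟨ha, hb⟩ | ⟨ha, hb⟩
  · exact intermediate_value_Icc' hab hf ⟨hb, ha⟩
  · exact intermediate_value_Icc hab hf ⟨ha, hb⟩

theorem Real.logb_zpow (b x : ℝ) (k : ℤ) : logb b (x ^ k) = k * logb b x := by
  rw [logb, log_zpow, mul_div_assoc, logb]

theorem Real.mul_logb_mem_Icc {b p q t c c' n : ℝ} (hb : 1 < b) (hp : 0 < p)
    (ht : t ∈ Set.Icc p q) (hn : 0 ≤ n) (hc : b ^ c ≤ p ^ n) (hc' : q ^ n ≤ b ^ c') :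
    n * logb b t ∈ Set.Icc c c' := by
  have hb0 : 0 < b := zero_lt_one.trans hb
  have ht0 : 0 < t := hp.trans_le ht.1
  have hlo := (logb_le_logb hb (rpow_pos_of_pos hb0 c) (rpow_pos_of_pos ht0 n)).mpr
    (hc.trans (rpow_le_rpow hp.le ht.1 hn))
  have hhi := (logb_le_logb hb (rpow_pos_of_pos ht0 n) (rpow_pos_of_pos hb0 c')).mpr
    ((rpow_le_rpow ht0.le ht.2 hn).trans hc')
  rw [logb_rpow hb0 hb.ne', logb_rpow_eq_mul_logb_of_pos ht0] at hlo hhi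
  exact ⟨hlo, hhi⟩

theorem Matrix.det_ne_zero_of_weighted_sum_row_lt_diag {K n : Type*} [NormedField K] [Fintype n]
    [DecidableEq n] {A : Matrix n n K} (d : n → K)
    (h : ∀ k, ∑ j ∈ Finset.univ.erase k, ‖A k j‖ * ‖d j‖ < ‖A k k‖ * ‖d k‖) : A.det ≠ 0 := by
  have hAd : (A * Matrix.diagonal d).det ≠ 0 :=
    det_ne_zero_of_sum_row_lt_diag (by simpa only [Matrix.mul_diagonal, norm_mul] using h)
  rw [Matrix.det_mul] at hAd
  exact left_ne_zero_of_mul hAd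

namespace Matrix.GeneralLinearGroup

variable {n K : Type*} [Fintype n] [DecidableEq n] [Field K] {w : n → K} {g h : GL n K} {a b : K}

theorem mulVec_mul_eq_smul (hg : (g : Matrix n n K) *ᵥ w = a • w)
    (hh : (h : Matrix n n K) *ᵥ w = b • w) :
    ((g * h : GL n K) : Matrix n n K) *ᵥ w = (a * b) • w := by
  rw [Units.val_mul, ← mulVec_mulVec, hh, mulVec_smul, hg, smul_smul, mul_comm]

theorem mulVec_inv_eq_smul (hg : (g : Matrix n n K) *ᵥ w = a • w) :
    ((g⁻¹ : GL n K) : Matrix n n K) *ᵥ w = a⁻¹ • w := by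
  have hw : w = a • ((g⁻¹ : GL n K) : Matrix n n K) *ᵥ w := by
    rw [← mulVec_smul, ← hg, mulVec_mulVec, ← Units.val_mul, inv_mul_cancel, Units.val_one,
      one_mulVec]
  rcases eq_or_ne a 0 with rfl | ha
  · rw [hw, zero_smul, smul_zero, mulVec_zero]
  · rw [hw, smul_smul, inv_mul_cancel₀ ha, one_smul, ← hw]

theorem mulVec_pow_eq_smul (hg : (g : Matrix n n K) *ᵥ w = a • w) (m : ℕ) :
    ((g ^ m : GL n K) : Matrix n n K) *ᵥ w = (a ^ m) • w := by
  induction m with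
  | zero => simp
  | succ m ih => rw [pow_succ, pow_succ]; exact mulVec_mul_eq_smul ih hg

theorem mulVec_zpow_eq_smul (hg : (g : Matrix n n K) *ᵥ w = a • w) (k : ℤ) :
    ((g ^ k : GL n K) : Matrix n n K) *ᵥ w = (a ^ k) • w := by
  cases k with
  | ofNat m => simpa using mulVec_pow_eq_smul hg m
  | negSucc m => simpa [zpow_negSucc] using mulVec_inv_eq_smul (mulVec_pow_eq_smul hg (m + 1))

theorem eq_one_of_mulVec_eq_smul (hg : (g : Matrix n n K) *ᵥ w = a • w) (hw : w ≠ 0)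
    (h1 : g = 1) : a = 1 := by
  subst h1
  rw [Units.val_one, one_mulVec] at hg
  exact (smul_left_injective K hw (show (1 : K) • w = a • w by rwa [one_smul])).symm

end Matrix.GeneralLinearGroup

theorem det_ne_zero_of_eight_mul_mem_Icc {L : Fin 3 → Fin 3 → ℝ}
    (hL : ∀ i j, 8 * L i j ∈ Set.Icc (!![-11, -7, 4; -5, -14, 5; -2, 7, -30] i j)
      (!![-9, -6, 5; -4, -12, 6; 0, 8, -27] i j)) : (Matrix.of L).det ≠ 0 := by
  refine Matrix.det_ne_zero_of_weighted_sum_row_lt_diag ![3, 2, 1] fun k => ?_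
  obtain ⟨l₀, u₀⟩ := hL k 0
  obtain ⟨l₁, u₁⟩ := hL k 1
  obtain ⟨l₂, u₂⟩ := hL k 2
  fin_cases k <;>
    simp only [Fin.zero_eta, Fin.mk_one, Fin.reduceFinMk, Fin.isValue, Matrix.of_apply,
      Matrix.cons_val', Matrix.cons_val_zero, Matrix.cons_val_one, Matrix.cons_val,
      Matrix.cons_val_fin_one, Real.norm_eq_abs, Finset.mem_univ, Finset.sum_erase_eq_sub,
      Fin.sum_univ_three, Nat.abs_ofNat, abs_one, mul_one] at l₀ l₁ l₂ u₀ u₁ u₂ ⊢ <;>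
    repeat (first | rw [abs_of_nonpos (by linarith)] | rw [abs_of_nonneg (by linarith)])
  all_goals linarith

theorem det_logb_ne_zero_of_mem_Icc {T : Fin 3 → Fin 3 → ℝ}
    (hT : ∀ i j, T i j ∈ Set.Icc (!![0.42, 0.57, 1.42; 0.67, 0.32, 1.67; 0.91, 1.91, 0.08] i j)
      (!![0.43, 0.58, 1.43; 0.68, 0.33, 1.68; 0.92, 1.92, 0.09] i j)) :
    (Matrix.of fun i j => logb 2 (T i j)).det ≠ 0 := by
  refine det_ne_zero_of_eight_mul_mem_Icc fun i j => mul_logb_mem_Icc one_lt_two ?_ (hT i j)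
    (by norm_num) ?_ ?_ <;>
  fin_cases i <;> fin_cases j <;> norm_num

-- Base 2 turns every bound on these logarithms into a rational comparison `2 ^ c ≤ p ^ 8`.
noncomputable def unitLogs (x : ℝ) : Fin 3 → ℝ := ![logb 2 |x|, logb 2 |x - 1|, logb 2 |x + 1|]

theorem det_unitLogs_ne_zero {x₁ x₂ x₃ : ℝ} (h₁ : x₁ ∈ Set.Icc 0.42 0.43)
    (h₂ : x₂ ∈ Set.Icc 0.67 0.68) (h₃ : x₃ ∈ Set.Icc (-0.92) (-0.91)) :
    (Matrix.of ![unitLogs x₁, unitLogs x₂, unitLogs x₃]).det ≠ 0 := by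
  obtain ⟨h₁, h₁'⟩ := h₁
  obtain ⟨h₂, h₂'⟩ := h₂
  obtain ⟨h₃, h₃'⟩ := h₃
  convert det_logb_ne_zero_of_mem_Icc (T := ![![|x₁|, |x₁ - 1|, |x₁ + 1|],
    ![|x₂|, |x₂ - 1|, |x₂ + 1|], ![|x₃|, |x₃ - 1|, |x₃ + 1|]]) ?_
  · rename_i i j
    fin_cases i <;> fin_cases j <;> rfl
  intro i j
  fin_cases i <;> fin_cases j <;>
    simp only [Fin.zero_eta, Fin.mk_one, Fin.reduceFinMk, Fin.isValue, Matrix.of_apply,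
      Matrix.cons_val', Matrix.cons_val_zero, Matrix.cons_val_one, Matrix.cons_val,
      Matrix.cons_val_fin_one, Set.mem_Icc] <;>
    constructor <;>
    first
    | rw [abs_of_nonneg (by linarith)]; linarith
    | rw [abs_of_nonpos (by linarith)]; linarith

theorem A1_map_mulVec_eq_smul {x : ℝ} (hx : x ^ 4 - 4 * x ^ 3 + 3 * x - 1 = 0) :
    A1.map (algebraMap ℚ ℝ) *ᵥ ![1, x, x ^ 2, x ^ 3] = x • ![1, x, x ^ 2, x ^ 3] := by
  ext r
  fin_cases r <;> simp [A1, Matrix.mulVec, dotProduct, Fin.sum_univ_four] <;>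
    first | linear_combination -hx | ring

open Matrix.GeneralLinearGroup in
theorem eigenvalue_eq_one_of_root {x : ℝ} (hx : x ^ 4 - 4 * x ^ 3 + 3 * x - 1 = 0) {i j k : ℤ}
    (h : B11 ^ i * B12 ^ j * B13 ^ k = 1) :
    ((x ^ 2)⁻¹) ^ i * ((x - 1) ^ 2 * (x ^ 2)⁻¹) ^ j * ((x - 1) ^ 2 * (x + 1) * (x ^ 2)⁻¹) ^ k
      = 1 := by
  set w : Fin 4 → ℝ := ![1, x, x ^ 2, x ^ 3]
  set ψ : GL (Fin 4) ℚ →* GL (Fin 4) ℝ := map (algebraMap ℚ ℝ)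
  have hA : A1.map (algebraMap ℚ ℝ) *ᵥ w = x • w := A1_map_mulVec_eq_smul hx
  have hg : (ψ gA1 : Matrix (Fin 4) (Fin 4) ℝ) *ᵥ w = x • w := hA
  have hu : (ψ uA1 : Matrix (Fin 4) (Fin 4) ℝ) *ᵥ w = (x - 1) • w := by
    have : (ψ uA1 : Matrix (Fin 4) (Fin 4) ℝ) = A1.map (algebraMap ℚ ℝ) - 1 := by
      simp [ψ, uA1, Matrix.map_sub]
    rw [this, Matrix.sub_mulVec, hA, Matrix.one_mulVec, sub_smul, one_smul]
  have hv : (ψ vA1 : Matrix (Fin 4) (Fin 4) ℝ) *ᵥ w = (x + 1) • w := by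
    have : (ψ vA1 : Matrix (Fin 4) (Fin 4) ℝ) = A1.map (algebraMap ℚ ℝ) + 1 := by
      simp [ψ, vA1, Matrix.map_add]
    rw [this, Matrix.add_mulVec, hA, Matrix.one_mulVec, add_smul, one_smul]
  have hg₂ := mulVec_inv_eq_smul (mulVec_pow_eq_smul hg 2)
  refine eq_one_of_mulVec_eq_smul (w := w) (g := ψ (B11 ^ i * B12 ^ j * B13 ^ k)) ?_
    (fun hw => one_ne_zero (congrFun hw 0)) (by rw [h, map_one])
  simp only [B11, B12, B13, map_mul, map_zpow, map_pow, map_inv]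
  exact mulVec_mul_eq_smul (mulVec_mul_eq_smul (mulVec_zpow_eq_smul hg₂ i)
    (mulVec_zpow_eq_smul (mulVec_mul_eq_smul (mulVec_pow_eq_smul hu 2) hg₂) j))
    (mulVec_zpow_eq_smul
      (mulVec_mul_eq_smul (mulVec_mul_eq_smul (mulVec_pow_eq_smul hu 2) hv) hg₂) k)

theorem unitLogs_dotProduct_eq_zero {x : ℝ} (hx : x ^ 4 - 4 * x ^ 3 + 3 * x - 1 = 0) {i j k : ℤ}
    (h : B11 ^ i * B12 ^ j * B13 ^ k = 1) :
    unitLogs x ⬝ᵥ ![-2 * (i + j + k), 2 * (j + k), (k : ℝ)] = 0 := by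
  have h₀ : x ≠ 0 := by rintro rfl; norm_num at hx
  have h₁ : x - 1 ≠ 0 := fun h₁ => by rw [sub_eq_zero.mp h₁] at hx; norm_num at hx
  have h₂ : x + 1 ≠ 0 := fun h₂ => by rw [eq_neg_of_add_eq_zero_left h₂] at hx; norm_num at hx
  have hlog := congrArg (logb 2) (eigenvalue_eq_one_of_root hx h)
  have hx₀ : (x ^ 2)⁻¹ ≠ 0 := by positivity
  rw [logb_one, logb_mul (by positivity) (by positivity), logb_mul (by positivity) (by positivity),
    logb_zpow, logb_zpow, logb_zpow, logb_mul (by positivity) hx₀, logb_mul (by positivity) hx₀,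
    logb_mul (by positivity) h₂, logb_inv, logb_pow, logb_pow] at hlog
  simp only [unitLogs, dotProduct, Fin.sum_univ_three, logb_abs, Matrix.cons_val_zero,
    Matrix.cons_val_one, Matrix.cons_val_two, Matrix.head_cons, Matrix.tail_cons]
  push_cast at hlog
  linear_combination hlog

theorem statement3 (i j k : ℤ) (h : B11 ^ i * B12 ^ j * B13 ^ k = 1) :
    i = 0 ∧ j = 0 ∧ k = 0 := by
  have hf : Continuous fun x : ℝ => x ^ 4 - 4 * x ^ 3 + 3 * x - 1 := by fun_prop
  obtain ⟨x₁, hx₁, r₁⟩ := exists_mem_Icc_eq_zero_of_mul_nonpos (a := 0.42) (b := 0.43)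
    (by norm_num) hf.continuousOn (by norm_num)
  obtain ⟨x₂, hx₂, r₂⟩ := exists_mem_Icc_eq_zero_of_mul_nonpos (a := 0.67) (b := 0.68)
    (by norm_num) hf.continuousOn (by norm_num)
  obtain ⟨x₃, hx₃, r₃⟩ := exists_mem_Icc_eq_zero_of_mul_nonpos (a := -0.92) (b := -0.91)
    (by norm_num) hf.continuousOn (by norm_num)
  have hv : Matrix.of ![unitLogs x₁, unitLogs x₂, unitLogs x₃] *ᵥ
      ![-2 * (i + j + k), 2 * (j + k), (k : ℝ)] = 0 := by
    ext r
    fin_cases r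
    exacts [unitLogs_dotProduct_eq_zero r₁ h, unitLogs_dotProduct_eq_zero r₂ h,
      unitLogs_dotProduct_eq_zero r₃ h]
  have hzero := Matrix.eq_zero_of_mulVec_eq_zero (det_unitLogs_ne_zero hx₁ hx₂ hx₃) hv
  have e₀ : (i + j + k : ℝ) = 0 := by simpa using congrFun hzero 0
  have e₁ : (j + k : ℝ) = 0 := by simpa using congrFun hzero 1
  have e₂ : k = 0 := by simpa using congrFun hzero 2
  norm_cast at e₀ e₁
  omega
end

section
/- The matrix S has determinant ±1, does not commute with A1 (S·A1 ≠ A1·S), yet the conjugate S·A1·S^{-1} commutes with A1. -/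
/-! `S` is an involution, so `det S = ±1` and `S⁻¹ = S`. The conjugate `S * A1 * S` equals
`p(A1)` for `p = 4X³ - 14X² - 7X + 9`: since `A1` is a companion matrix, `p` can be read off
the first row of `S * A1 * S`. Being a polynomial in `A1`, it commutes with `A1`, while already
the `(0, 0)` entries of `S * A1` and `A1 * S` differ. -/

open Matrix Polynomial

def S : Matrix (Fin 4) (Fin 4) ℚ :=
  !![4, -16, 17, -3; 3, -11, 11, -2; 3, -8, 6, -1; 6, -8, -2, 1]

theorem Matrix.det_eq_one_or_neg_one_of_mul_self_eq_one {n R : Type*} [Fintype n]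
    [DecidableEq n] [CommRing R] [NoZeroDivisors R] {M : Matrix n n R} (h : M * M = 1) :
    M.det = 1 ∨ M.det = -1 :=
  mul_self_eq_one_iff.mp (by rw [← det_mul, h, det_one])

theorem Polynomial.commute_aeval_self {R A : Type*} [CommSemiring R] [Semiring A] [Algebra R A]
    (a : A) (p : R[X]) : Commute (aeval a p) a := by
  simpa using (Commute.all p X).map (aeval a)

theorem S_mul_self : S * S = 1 := by
  ext i j
  fin_cases i <;> fin_cases j <;>
    norm_num [S, mul_apply, Fin.sum_univ_four, cons_val_zero, cons_val_one, cons_val_two,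
      cons_val_three]

theorem S_mul_A1_mul_S :
    S * A1 * S = aeval A1 (C 4 * X ^ 3 - C 14 * X ^ 2 - C 7 * X + C 9 : ℚ[X]) := by
  simp only [map_add, map_sub, map_mul, aeval_C, aeval_X_pow, aeval_X, algebraMap_eq_diagonal]
  ext i j
  fin_cases i <;> fin_cases j <;>
    norm_num [S, A1, pow_succ, mul_apply, Fin.sum_univ_four, diagonal_apply, cons_val_zero,
      cons_val_one, cons_val_two, cons_val_three]

theorem S_mul_A1_ne_A1_mul_S : S * A1 ≠ A1 * S := by
  intro h
  have h00 := congrFun₂ h 0 0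
  norm_num [S, A1, mul_apply, Fin.sum_univ_four, cons_val_zero, cons_val_one, cons_val_two,
    cons_val_three] at h00

theorem statement7 :
    (S.det = 1 ∨ S.det = -1) ∧
    S * A1 ≠ A1 * S ∧
    S * A1 * S⁻¹ * A1 = A1 * (S * A1 * S⁻¹) := by
  have hS_inv : S⁻¹ = S := inv_eq_left_inv S_mul_self
  refine ⟨det_eq_one_or_neg_one_of_mul_self_eq_one S_mul_self, S_mul_A1_ne_A1_mul_S, ?_⟩
  rw [hS_inv, S_mul_A1_mul_S]
  exact commute_aeval_self A1 _
end

section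
/- The matrices B31 = A3^{-2}, B32 = (A3 - E) · A3^{-1}, and B33 = A3 + E all have integer entries and determinant 1, commute pairwise, each of them commutes with A3, and they generate a free abelian group of rank 3: for all integers i, j, k, if B31^i · B32^j · B33^k equals the identity matrix, then i = j = k = 0. -/
/-!
The matrices B31 = A3⁻², B32 = (A3 - E) A3⁻¹ and B33 = A3 + E lie in the group generated by A3,
A3 - E and A3 + E. These are polynomials in A3, so the group is commutative, and they are integer
matrices of determinant det (A3 - t) = pA3 t = 1 at t = 0, 1, -1; as the inverse of an integer
matrix of determinant 1 is its adjugate, the whole group consists of integer matrices of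
determinant 1.

For freeness, a real root x of pA3 gives the common eigenvector (1, x, x², x³), on which B31, B32,
B33 act by x⁻², (x - 1) / x and x + 1, so B31^i B32^j B33^k = E yields one linear relation
between log |x|, log |x - 1|, log |x + 1| per real root. Since pA3 (-1/x) = pA3 x / x⁴, the roots
come in pairs x, -1/x; the relations at b ∈ (1, 3/2) and at -1/b add up to
(j + k) log ((b² - 1) / b) = 0, so j = -k. The relation then reads
2 (i - k) log x = k log ((x + 1) / (x (x - 1))), whose right-hand logarithm is positive at b and
negative at a root a > 5/2; hence k = 0, and then i = 0.
-/

open Matrix Polynomial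

def A3 : Matrix (Fin 4) (Fin 4) ℚ :=
  !![0, 1, 0, 0; 0, 0, 1, 0; 0, 0, 0, 1; -1, -3, 1, 3]

lemma hdetA3 : A3.det ≠ 0 := by
  rw [Matrix.det_succ_row_zero]
  simp [A3, Fin.sum_univ_succ, Matrix.det_fin_three, show (Fin.succAbove 1 (2 : Fin 3) : Fin 4) = 3 from rfl] <;> norm_num

lemma hdetA3sub : (A3 - 1).det ≠ 0 := by
  have h : A3 - 1 = !![-1, 1, 0, 0; 0, -1, 1, 0; 0, 0, -1, 1; -1, -3, 1, 2] := by
    ext i j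
    fin_cases i <;> fin_cases j <;>
      simp [A3, Matrix.one_apply, Matrix.vecHead, Matrix.vecTail] <;> norm_num
  rw [h]
  rw [Matrix.det_succ_row_zero]
  simp [Fin.sum_univ_succ, Matrix.det_fin_three, show (Fin.succAbove 1 (2 : Fin 3) : Fin 4) = 3 from rfl] <;> norm_num

lemma hdetA3add : (A3 + 1).det ≠ 0 := by
  have h : A3 + 1 = !![1, 1, 0, 0; 0, 1, 1, 0; 0, 0, 1, 1; -1, -3, 1, 4] := by
    ext i j
    fin_cases i <;> fin_cases j <;>
      simp [A3, Matrix.one_apply, Matrix.vecHead, Matrix.vecTail] <;> norm_num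
  rw [h]
  rw [Matrix.det_succ_row_zero]
  simp [Fin.sum_univ_succ, Matrix.det_fin_three, show (Fin.succAbove 1 (2 : Fin 3) : Fin 4) = 3 from rfl] <;> norm_num

noncomputable def gA3 : GL (Fin 4) ℚ := Matrix.GeneralLinearGroup.mkOfDetNeZero A3 hdetA3
noncomputable def uA3 : GL (Fin 4) ℚ := Matrix.GeneralLinearGroup.mkOfDetNeZero (A3 - 1) hdetA3sub
noncomputable def vA3 : GL (Fin 4) ℚ := Matrix.GeneralLinearGroup.mkOfDetNeZero (A3 + 1) hdetA3add

noncomputable def B31 : GL (Fin 4) ℚ := (gA3 ^ 2)⁻¹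
noncomputable def B32 : GL (Fin 4) ℚ := uA3 * gA3⁻¹
noncomputable def B33 : GL (Fin 4) ℚ := vA3

def pA3 {R : Type*} [CommRing R] (x : R) : R := x ^ 4 - 3 * x ^ 3 - x ^ 2 + 3 * x + 1

lemma det_A3_sub_scalar (t : ℚ) : (A3 - scalar (Fin 4) t).det = pA3 t := by
  rw [det_succ_row_zero]
  simp [A3, pA3, Fin.sum_univ_succ, det_fin_three, Fin.succAbove]
  ring

lemma det_gA3 : GeneralLinearGroup.det gA3 = 1 :=
  Units.ext <| by simpa [gA3, pA3] using det_A3_sub_scalar 0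

lemma det_uA3 : GeneralLinearGroup.det uA3 = 1 :=
  Units.ext <| by simpa [uA3, pA3] using det_A3_sub_scalar 1

lemma det_vA3 : GeneralLinearGroup.det vA3 = 1 :=
  Units.ext <| by
    have h := det_A3_sub_scalar (-1)
    rw [map_neg, map_one, sub_neg_eq_add] at h
    norm_num [pA3] at h
    simpa [vA3] using h

lemma A3_mem_range : A3 ∈ (Int.castRingHom ℚ).mapMatrix.range :=
  ⟨!![0, 1, 0, 0; 0, 0, 1, 0; 0, 0, 0, 1; -1, -3, 1, 3], by
    ext i j; fin_cases i <;> fin_cases j <;> simp [A3]⟩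

lemma inv_mem_range_mapMatrix {n R S : Type*} [Fintype n] [DecidableEq n] [CommRing R] [CommRing S]
    (f : R →+* S) {M : Matrix n n S} (hM : M ∈ f.mapMatrix.range) (hdet : M.det = 1) :
    M⁻¹ ∈ f.mapMatrix.range := by
  obtain ⟨N, rfl⟩ := hM
  rw [inv_def, hdet, Ring.inverse_one, one_smul]
  exact ⟨N.adjugate, f.map_adjugate N⟩

def subgroupA3 : Subgroup (GL (Fin 4) ℚ) := Subgroup.closure {gA3, uA3, vA3}

lemma det_eq_one_of_mem_subgroupA3 {x : GL (Fin 4) ℚ} (hx : x ∈ subgroupA3) :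
    (x : Matrix (Fin 4) (Fin 4) ℚ).det = 1 := by
  suffices subgroupA3 ≤ GeneralLinearGroup.det.ker by
    simpa [← GeneralLinearGroup.val_det_apply] using congrArg Units.val (this hx)
  rw [subgroupA3, Subgroup.closure_le]
  simp [Set.insert_subset_iff, det_gA3, det_uA3, det_vA3]

lemma mem_range_of_mem_subgroupA3 {x : GL (Fin 4) ℚ} (hx : x ∈ subgroupA3) :
    (x : Matrix (Fin 4) (Fin 4) ℚ) ∈ (Int.castRingHom ℚ).mapMatrix.range := by
  induction hx using Subgroup.closure_induction with
  | mem y hy =>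
    simp only [Set.mem_insert_iff, Set.mem_singleton_iff] at hy
    rcases hy with rfl | rfl | rfl
    · exact A3_mem_range
    · exact sub_mem A3_mem_range (one_mem _)
    · exact add_mem A3_mem_range (one_mem _)
  | one => exact one_mem _
  | mul y z _ _ hy hz => exact mul_mem hy hz
  | inv y hy' hy =>
    rw [coe_units_inv]
    exact inv_mem_range_mapMatrix _ hy (det_eq_one_of_mem_subgroupA3 hy')

lemma exists_int_eq_of_mem_subgroupA3 {x : GL (Fin 4) ℚ} (hx : x ∈ subgroupA3) (i j : Fin 4) :
    ∃ m : ℤ, (x : Matrix (Fin 4) (Fin 4) ℚ) i j = m := by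
  obtain ⟨N, hN⟩ := mem_range_of_mem_subgroupA3 hx
  exact ⟨N i j, by rw [← hN]; rfl⟩

lemma commute_of_mem_subgroupA3 {x y : GL (Fin 4) ℚ} (hx : x ∈ subgroupA3) (hy : y ∈ subgroupA3) :
    Commute (x : Matrix (Fin 4) (Fin 4) ℚ) y := by
  have : IsMulCommutative subgroupA3 := by
    refine Subgroup.isMulCommutative_closure ?_
    simp only [Set.mem_insert_iff, Set.mem_singleton_iff]
    rintro x (rfl | rfl | rfl) y (rfl | rfl | rfl) <;> ext1 <;>
      simp only [Units.val_mul, gA3, uA3, vA3, GeneralLinearGroup.val_mkOfDetNeZero] <;> noncomm_ring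
  exact Commute.units_val_iff.mpr (setLike_mul_comm hx hy)

lemma gA3_mem : gA3 ∈ subgroupA3 := Subgroup.subset_closure (by simp)

lemma B31_mem : B31 ∈ subgroupA3 := inv_mem (pow_mem gA3_mem 2)

lemma B32_mem : B32 ∈ subgroupA3 :=
  mul_mem (Subgroup.subset_closure (by simp)) (inv_mem gA3_mem)

lemma B33_mem : B33 ∈ subgroupA3 := Subgroup.subset_closure (by simp [B33])

section Eigenvector

variable {n K : Type*} [Fintype n] [DecidableEq n] [Field K] {v : n → K} {μ : K}

lemma mulVec_inv_eq_smul {u : GL n K} (h : (u : Matrix n n K) *ᵥ v = μ • v) :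
    ((u⁻¹ : GL n K) : Matrix n n K) *ᵥ v = μ⁻¹ • v := by
  have hv : μ • ((u⁻¹ : GL n K) : Matrix n n K) *ᵥ v = v := by
    rw [← mulVec_smul, ← h, mulVec_mulVec, ← Units.val_mul, inv_mul_cancel, Units.val_one,
      one_mulVec]
  rcases eq_or_ne μ 0 with rfl | hμ
  · rw [zero_smul] at hv
    simp [← hv]
  · calc ((u⁻¹ : GL n K) : Matrix n n K) *ᵥ v
        = μ⁻¹ • μ • ((u⁻¹ : GL n K) : Matrix n n K) *ᵥ v := by rw [inv_smul_smul₀ hμ]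
      _ = μ⁻¹ • v := by rw [hv]

lemma mulVec_zpow_eq_smul {u : GL n K} (hμ : μ ≠ 0) (h : (u : Matrix n n K) *ᵥ v = μ • v)
    (m : ℤ) : ((u ^ m : GL n K) : Matrix n n K) *ᵥ v = μ ^ m • v := by
  induction m using Int.induction_on with
  | zero => simp
  | succ m ih =>
    rw [_root_.zpow_add_one, Units.val_mul, ← mulVec_mulVec, h, mulVec_smul, ih, smul_smul,
      zpow_add_one₀ hμ, mul_comm]
  | pred m ih =>
    rw [_root_.zpow_sub_one, Units.val_mul, ← mulVec_mulVec, mulVec_inv_eq_smul h, mulVec_smul, ih,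
      smul_smul, zpow_sub_one₀ hμ, mul_comm]

end Eigenvector

lemma ne_zero_of_pA3_eq_zero {x : ℝ} (hx : pA3 x = 0) : x ≠ 0 ∧ x - 1 ≠ 0 ∧ x + 1 ≠ 0 := by
  refine ⟨?_, fun h => ?_, fun h => ?_⟩
  · rintro rfl
    norm_num [pA3] at hx
  · rw [sub_eq_zero.mp h] at hx
    norm_num [pA3] at hx
  · rw [eq_neg_of_add_eq_zero_left h] at hx
    norm_num [pA3] at hx

def powersVec (x : ℝ) : Fin 4 → ℝ := fun i => x ^ (i : ℕ)

lemma Matrix.GeneralLinearGroup.val_map {n R S : Type*} [Fintype n] [DecidableEq n] [CommRing R]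
    [CommRing S] (f : R →+* S) (g : GL n R) :
    (GeneralLinearGroup.map f g : Matrix n n S) = f.mapMatrix g :=
  rfl

local notation "Φ" => GeneralLinearGroup.map (n := Fin 4) (Rat.castHom ℝ)

section RealRoot

variable {x : ℝ} (hx : pA3 x = 0)
include hx

lemma A3_mulVec_powersVec : (Rat.castHom ℝ).mapMatrix A3 *ᵥ powersVec x = x • powersVec x := by
  unfold pA3 at hx
  ext i
  fin_cases i <;> simp [A3, powersVec, mulVec, dotProduct, Fin.sum_univ_four]
  · ring
  · ring
  · linear_combination -hx

lemma B31_mulVec_powersVec :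
    (Φ B31 : Matrix (Fin 4) (Fin 4) ℝ) *ᵥ powersVec x = (x ^ 2)⁻¹ • powersVec x := by
  rw [B31, map_inv, map_pow, mulVec_inv_eq_smul]
  exact_mod_cast mulVec_zpow_eq_smul (ne_zero_of_pA3_eq_zero hx).1 (A3_mulVec_powersVec hx) 2

lemma B32_mulVec_powersVec :
    (Φ B32 : Matrix (Fin 4) (Fin 4) ℝ) *ᵥ powersVec x = ((x - 1) * x⁻¹) • powersVec x := by
  rw [B32, map_mul, Units.val_mul, ← mulVec_mulVec, map_inv,
    mulVec_inv_eq_smul (A3_mulVec_powersVec hx), mulVec_smul, GeneralLinearGroup.val_map,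
    uA3, GeneralLinearGroup.val_mkOfDetNeZero, map_sub, map_one, sub_mulVec, one_mulVec,
    A3_mulVec_powersVec hx]
  module

lemma B33_mulVec_powersVec :
    (Φ B33 : Matrix (Fin 4) (Fin 4) ℝ) *ᵥ powersVec x = (x + 1) • powersVec x := by
  rw [GeneralLinearGroup.val_map, B33, vA3, GeneralLinearGroup.val_mkOfDetNeZero, map_add,
    map_one, add_mulVec, one_mulVec, A3_mulVec_powersVec hx, add_smul, one_smul]

lemma eigenvalue_eq_one_of_eq_one {i j k : ℤ} (h : B31 ^ i * B32 ^ j * B33 ^ k = 1) :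
    (x + 1) ^ k * ((x - 1) * x⁻¹) ^ j * ((x ^ 2) ^ i)⁻¹ = 1 := by
  obtain ⟨hx0, hx1, hx2⟩ := ne_zero_of_pA3_eq_zero hx
  have h' := congrArg (fun y => (Φ y : Matrix (Fin 4) (Fin 4) ℝ) *ᵥ powersVec x) h
  simp only [map_mul, map_zpow, map_one, Units.val_mul, Units.val_one, one_mulVec,
    ← mulVec_mulVec] at h'
  simp only [mulVec_zpow_eq_smul hx2 (B33_mulVec_powersVec hx),
    mulVec_zpow_eq_smul (by simp [hx0, hx1]) (B32_mulVec_powersVec hx),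
    mulVec_zpow_eq_smul (by simp [hx0]) (B31_mulVec_powersVec hx), mulVec_smul, smul_smul] at h'
  simpa [powersVec] using congrFun h' 0

/-- The logarithm of `eigenvalue_eq_one_of_eq_one`; as `Real.log` is `log |·|`, it also makes
sense at the negative roots of `pA3`. -/
def LogRelation (i j k : ℤ) (x : ℝ) : Prop :=
  (2 * i + j) * Real.log x = j * Real.log (x - 1) + k * Real.log (x + 1)

lemma logRelation_of_eq_one {i j k : ℤ} (h : B31 ^ i * B32 ^ j * B33 ^ k = 1) :
    LogRelation i j k x := by
  obtain ⟨hx0, hx1, hx2⟩ := ne_zero_of_pA3_eq_zero hx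
  have hk : (x + 1) ^ k ≠ 0 := zpow_ne_zero _ hx2
  have hj : ((x - 1) * x⁻¹) ^ j ≠ 0 := zpow_ne_zero _ (mul_ne_zero hx1 (inv_ne_zero hx0))
  have hlog := congrArg Real.log (eigenvalue_eq_one_of_eq_one hx h)
  rw [Real.log_mul (mul_ne_zero hk hj) (inv_ne_zero (zpow_ne_zero _ (pow_ne_zero _ hx0))),
    Real.log_mul hk hj, Real.log_inv, Real.log_zpow, Real.log_zpow, Real.log_zpow,
    Real.log_mul hx1 (inv_ne_zero hx0), Real.log_inv, Real.log_pow, Real.log_one] at hlog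
  unfold LogRelation
  linear_combination -hlog

end RealRoot

lemma pA3_neg_inv {x : ℝ} (hx : x ≠ 0) : pA3 (-x⁻¹) = pA3 x / x ^ 4 := by
  unfold pA3
  field_simp
  ring

lemma exists_root_pA3_gt : ∃ a : ℝ, 5 / 2 < a ∧ pA3 a = 0 := by
  obtain ⟨a, ha, hpa⟩ := intermediate_value_Ioo (by norm_num) (by unfold pA3; fun_prop)
    (show (0 : ℝ) ∈ Set.Ioo (pA3 (5 / 2)) (pA3 3) by norm_num [pA3])
  exact ⟨a, ha.1, hpa⟩

lemma exists_root_pA3_mem_Ioo : ∃ b : ℝ, b ∈ Set.Ioo 1 (3 / 2) ∧ pA3 b = 0 :=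
  intermediate_value_Ioo' (by norm_num) (by unfold pA3; fun_prop)
    (show (0 : ℝ) ∈ Set.Ioo (pA3 (3 / 2)) (pA3 1) by norm_num [pA3])

lemma add_eq_zero_of_logRelation_neg_inv {i j k : ℤ} {x : ℝ} (hx : 1 < x) (hx' : x ^ 2 < x + 1)
    (h : LogRelation i j k x) (h' : LogRelation i j k (-x⁻¹)) : j + k = 0 := by
  have hx0 : x ≠ 0 := by positivity
  have hx1 : x - 1 ≠ 0 := by linarith
  have hx2 : x + 1 ≠ 0 := by linarith
  have hlog : Real.log (-x⁻¹) = -Real.log x := by rw [Real.log_neg_eq_log, Real.log_inv]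
  have hlog₁ : Real.log (-x⁻¹ - 1) = Real.log (x + 1) - Real.log x := by
    rw [show -x⁻¹ - 1 = -((x + 1) / x) by field_simp; ring, Real.log_neg_eq_log,
      Real.log_div hx2 hx0]
  have hlog₂ : Real.log (-x⁻¹ + 1) = Real.log (x - 1) - Real.log x := by
    rw [show -x⁻¹ + 1 = (x - 1) / x by field_simp; ring, Real.log_div hx1 hx0]
  unfold LogRelation at h h'
  rw [hlog, hlog₁, hlog₂] at h'
  have hneg : Real.log (x - 1) + Real.log (x + 1) - Real.log x < 0 := by
    rw [← Real.log_mul hx1 hx2, ← Real.log_div (mul_ne_zero hx1 hx2) hx0]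
    apply Real.log_neg (by positivity)
    rw [div_lt_one (by positivity)]
    nlinarith
  have hsum : ((j : ℝ) + k) * (Real.log (x - 1) + Real.log (x + 1) - Real.log x) = 0 := by
    linear_combination -h - h'
  exact_mod_cast (mul_eq_zero.mp hsum).resolve_right hneg.ne

lemma eq_zero_of_logRelation {i j k : ℤ} {a b : ℝ} (ha : 5 / 2 < a) (hb : b ∈ Set.Ioo 1 (3 / 2))
    (Ha : LogRelation i j k a) (Hb : LogRelation i j k b) (Hb' : LogRelation i j k (-b⁻¹)) :
    i = 0 ∧ j = 0 ∧ k = 0 := by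
  obtain ⟨hb₁, hb₂⟩ := hb
  have hjk := add_eq_zero_of_logRelation_neg_inv hb₁ (by nlinarith) Hb Hb'
  obtain rfl : j = -k := by omega
  unfold LogRelation at Ha Hb
  push_cast at Ha Hb
  have hloga : 0 < Real.log a := Real.log_pos (by linarith)
  have hlogb : 0 < Real.log b := Real.log_pos hb₁
  have hNa : Real.log (a + 1) - Real.log (a - 1) - Real.log a < 0 := by
    have hpos : 0 < (a + 1) / (a - 1) := div_pos (by linarith) (by linarith)
    rw [← Real.log_div (by linarith) (by linarith), ← Real.log_div hpos.ne' (by linarith)]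
    apply Real.log_neg (div_pos hpos (by linarith))
    rw [div_lt_one (by linarith), div_lt_iff₀ (by linarith)]
    nlinarith
  have hPb : 0 < Real.log (b + 1) - Real.log (b - 1) - Real.log b := by
    have hpos : 0 < (b + 1) / (b - 1) := div_pos (by linarith) (by linarith)
    rw [← Real.log_div (by linarith) (by linarith), ← Real.log_div hpos.ne' (by linarith)]
    apply Real.log_pos
    rw [one_lt_div (by linarith), lt_div_iff₀ (by linarith)]
    nlinarith
  have hk : (k : ℝ) = 0 := by
    have : (k : ℝ) * ((Real.log (a + 1) - Real.log (a - 1) - Real.log a) * Real.log b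
        - (Real.log (b + 1) - Real.log (b - 1) - Real.log b) * Real.log a) = 0 := by
      linear_combination Real.log a * Hb - Real.log b * Ha
    exact (mul_eq_zero.mp this).resolve_right (by nlinarith)
  have hi : (i : ℝ) = 0 := by
    rw [hk] at Hb
    nlinarith
  have hk' : k = 0 := by exact_mod_cast hk
  exact ⟨by exact_mod_cast hi, by simp [hk'], hk'⟩

theorem statement17 :
    ((∀ i j, ∃ m : ℤ, (B31 : Matrix (Fin 4) (Fin 4) ℚ) i j = (m : ℚ)) ∧
    (∀ i j, ∃ m : ℤ, (B32 : Matrix (Fin 4) (Fin 4) ℚ) i j = (m : ℚ)) ∧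
    (∀ i j, ∃ m : ℤ, (B33 : Matrix (Fin 4) (Fin 4) ℚ) i j = (m : ℚ))) ∧
    ((B31 : Matrix (Fin 4) (Fin 4) ℚ).det = 1 ∧ (B32 : Matrix (Fin 4) (Fin 4) ℚ).det = 1 ∧ (B33 : Matrix (Fin 4) (Fin 4) ℚ).det = 1) ∧
    ((B31 : Matrix (Fin 4) (Fin 4) ℚ) * (B32 : Matrix (Fin 4) (Fin 4) ℚ) = (B32 : Matrix (Fin 4) (Fin 4) ℚ) * (B31 : Matrix (Fin 4) (Fin 4) ℚ) ∧ (B31 : Matrix (Fin 4) (Fin 4) ℚ) * (B33 : Matrix (Fin 4) (Fin 4) ℚ) = (B33 : Matrix (Fin 4) (Fin 4) ℚ) * (B31 : Matrix (Fin 4) (Fin 4) ℚ) ∧ (B32 : Matrix (Fin 4) (Fin 4) ℚ) * (B33 : Matrix (Fin 4) (Fin 4) ℚ) = (B33 : Matrix (Fin 4) (Fin 4) ℚ) * (B32 : Matrix (Fin 4) (Fin 4) ℚ)) ∧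
    ((B31 : Matrix (Fin 4) (Fin 4) ℚ) * A3 = A3 * (B31 : Matrix (Fin 4) (Fin 4) ℚ) ∧ (B32 : Matrix (Fin 4) (Fin 4) ℚ) * A3 = A3 * (B32 : Matrix (Fin 4) (Fin 4) ℚ) ∧ (B33 : Matrix (Fin 4) (Fin 4) ℚ) * A3 = A3 * (B33 : Matrix (Fin 4) (Fin 4) ℚ)) ∧
    (∀ i j k : ℤ, B31 ^ i * B32 ^ j * B33 ^ k = 1 → i = 0 ∧ j = 0 ∧ k = 0) := by
  refine ⟨⟨exists_int_eq_of_mem_subgroupA3 B31_mem, exists_int_eq_of_mem_subgroupA3 B32_mem,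
      exists_int_eq_of_mem_subgroupA3 B33_mem⟩,
    ⟨det_eq_one_of_mem_subgroupA3 B31_mem, det_eq_one_of_mem_subgroupA3 B32_mem,
      det_eq_one_of_mem_subgroupA3 B33_mem⟩,
    ⟨(commute_of_mem_subgroupA3 B31_mem B32_mem).eq, (commute_of_mem_subgroupA3 B31_mem B33_mem).eq,
      (commute_of_mem_subgroupA3 B32_mem B33_mem).eq⟩,
    ⟨(commute_of_mem_subgroupA3 B31_mem gA3_mem).eq, (commute_of_mem_subgroupA3 B32_mem gA3_mem).eq,
      (commute_of_mem_subgroupA3 B33_mem gA3_mem).eq⟩, ?_⟩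
  intro i j k h
  obtain ⟨a, ha, hpa⟩ := exists_root_pA3_gt
  obtain ⟨b, hb, hpb⟩ := exists_root_pA3_mem_Ioo
  have hpb' : pA3 (-b⁻¹) = 0 := by rw [pA3_neg_inv (by linarith [hb.1]), hpb, zero_div]
  exact eq_zero_of_logRelation ha hb (logRelation_of_eq_one hpa h) (logRelation_of_eq_one hpb h)
    (logRelation_of_eq_one hpb' h)
end
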